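/- arXiv:2409.06508 — 3 statements merged into one kernel-verified Lean document; each statement's English description precedes it below -/
import Mathlib

section
/- Let H be a complex Hilbert space, T a nonnegative self-adjoint operator, W a bounded symmetric operator, and set x + iy = ⟨φ, (T + A + W)φ⟩ for a unit vector φ ∈ D(T), where A is a symmetric perturbation satisfying |Im⟨φ, Aφ⟩| ≤ 2|a|·‖T^{1/2}φ‖ and Re⟨φ, Aφ⟩ ≥ −a², for a fixed a ∈ ℝ. Then x ≥ −a² + inf spec(W) and |y| ≤ 2|a|·sqrt(x + a² − inf spec(W)). -/
lemma neg_sq_add_le_and_abs_le_two_mul_sqrt {t r v y a w : ℝ} (ht : 0 ≤ t) (hr : -(a ^ 2) ≤ r)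
    (hv : w ≤ v) (hy : |y| ≤ 2 * |a| * √t) :
    -(a ^ 2) + w ≤ t + r + v ∧ |y| ≤ 2 * |a| * √(t + r + v + a ^ 2 - w) := by
  refine ⟨by linarith, hy.trans ?_⟩
  gcongr
  linarith

/-- Numerical-range estimate in the Combes–Thomas argument. Let `T` be a nonnegative
symmetric operator, `W` a bounded symmetric operator with `inf spec W ≥ w`, and `A` a
perturbation satisfying `|Im⟨φ, Aφ⟩| ≤ 2|a|·‖T^{1/2}φ‖ = 2|a|·√(Re⟨φ, Tφ⟩)` and
`Re⟨φ, Aφ⟩ ≥ −a²`, for a unit vector `φ`. Writing `x + iy = ⟨φ, (T + A + W)φ⟩`, one has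
`x ≥ −a² + w` and `|y| ≤ 2|a|·√(x + a² − w)`. -/
theorem stmt_11 {H : Type*} [NormedAddCommGroup H] [InnerProductSpace ℂ H]
    (T A : H →ₗ[ℂ] H) (W : H →L[ℂ] H) (a w : ℝ) (φ : H) (hφ : ‖φ‖ = 1)
    (hT : ∀ ψ : H, 0 ≤ (inner ℂ ψ (T ψ) : ℂ).re ∧ (inner ℂ ψ (T ψ) : ℂ).im = 0)
    (hW : ∀ ψ : H, ‖ψ‖ = 1 → w ≤ (inner ℂ ψ (W ψ) : ℂ).re ∧ (inner ℂ ψ (W ψ) : ℂ).im = 0)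
    (hAim : |(inner ℂ φ (A φ) : ℂ).im| ≤ 2 * |a| * Real.sqrt (inner ℂ φ (T φ) : ℂ).re)
    (hAre : -(a ^ 2) ≤ (inner ℂ φ (A φ) : ℂ).re) :
    (inner ℂ φ (T φ + A φ + W φ) : ℂ).re ≥ -(a ^ 2) + w ∧
    |(inner ℂ φ (T φ + A φ + W φ) : ℂ).im| ≤
      2 * |a| * Real.sqrt ((inner ℂ φ (T φ + A φ + W φ) : ℂ).re + a ^ 2 - w) := by
  obtain ⟨hTre, hTim⟩ := hT φ
  obtain ⟨hWre, hWim⟩ := hW φ hφ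
  have hre : (inner ℂ φ (T φ + A φ + W φ) : ℂ).re =
      (inner ℂ φ (T φ) : ℂ).re + (inner ℂ φ (A φ) : ℂ).re + (inner ℂ φ (W φ) : ℂ).re := by
    simp only [inner_add_right, Complex.add_re]
  have him : (inner ℂ φ (T φ + A φ + W φ) : ℂ).im = (inner ℂ φ (A φ) : ℂ).im := by
    simp only [inner_add_right, Complex.add_im, hTim, hWim, zero_add, add_zero]
  rw [hre, him]
  exact neg_sq_add_le_and_abs_le_two_mul_sqrt hTre hAre hWre hAim
end

section
/- Let a, b ∈ ℝ, C_V ≥ 1, L ≥ 1, and z ∈ ℂ with Im z ≠ 0. Define Q := {x + iy ∈ ℂ : x ≥ −a² − C_V·L, |y| ≤ 2|a|·sqrt(x + a² + C_V·L)}. If |a| ≤ min{1, |Im z|/(4·sqrt(Re z + 2 + C_V·L))} and Re z + 2 + C_V·L > 0, then dist(z, Q) ≥ min{1, |Im z|/2}. -/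
/-!
A point `w` of the region either lies at horizontal distance at least `1` from `z`, or has
`Re w ≤ Re z + 1`. In the second case the parabolic bound gives
`|Im w| ≤ 2|a|√(Re z + 2 + C_V L) ≤ |Im z| / 2`, since `a² ≤ 1`, so the vertical distance from
`z` to `w` is at least `|Im z| / 2`.
-/

theorem min_one_le_norm_sub_of_abs_im_le {z w : ℂ} {r : ℝ}
    (h : |z.re - w.re| < 1 → |w.im| ≤ |z.im| - r) : min 1 r ≤ ‖z - w‖ := by
  rcases le_or_gt 1 |z.re - w.re| with hre | hre
  · calc min 1 r ≤ 1 := min_le_left _ _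
      _ ≤ |(z - w).re| := by rwa [Complex.sub_re]
      _ ≤ ‖z - w‖ := Complex.abs_re_le_norm _
  · calc min 1 r ≤ r := min_le_right _ _
      _ ≤ |z.im| - |w.im| := by linarith [h hre]
      _ ≤ |(z - w).im| := by rw [Complex.sub_im]; exact abs_sub_abs_le_abs_sub _ _
      _ ≤ ‖z - w‖ := Complex.abs_im_le_norm _

theorem abs_im_le_of_le_parabola {a c : ℝ} {z w : ℂ} (ha₁ : |a| ≤ 1)
    (ha : |a| ≤ |z.im| / (4 * √(z.re + 2 + c))) (hre : w.re ≤ z.re + 1)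
    (hw : |w.im| ≤ 2 * |a| * √(w.re + a ^ 2 + c)) : |w.im| ≤ |z.im| / 2 := by
  have ha_sq : a ^ 2 ≤ 1 := by nlinarith [sq_abs a, abs_nonneg a]
  calc |w.im| ≤ 2 * |a| * √(w.re + a ^ 2 + c) := hw
    _ ≤ 2 * |a| * √(z.re + 2 + c) := by gcongr ?_ * √?_; linarith
    _ = |a| * (4 * √(z.re + 2 + c)) / 2 := by ring
    _ ≤ |z.im| / 2 := by gcongr; exact mul_le_of_le_div₀ (abs_nonneg _) (by positivity) ha

theorem stmt_12_general (a : ℝ) (CV L : ℝ) (z : ℂ)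
    (ha : |a| ≤ min 1 (|z.im| / (4 * Real.sqrt (z.re + 2 + CV * L)))) :
    ∀ w ∈ {w : ℂ | -a ^ 2 - CV * L ≤ w.re ∧
        |w.im| ≤ 2 * |a| * Real.sqrt (w.re + a ^ 2 + CV * L)},
      min 1 (|z.im| / 2) ≤ ‖z - w‖ := by
  rintro w ⟨-, hw⟩
  refine min_one_le_norm_sub_of_abs_im_le fun hre => ?_
  have hw_im := abs_im_le_of_le_parabola (le_min_iff.mp ha).1 (le_min_iff.mp ha).2
    (by linarith [(abs_lt.mp hre).1]) hw
  linarith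

/-- Distance estimate from `z` to the parabola-type region
`Q = {x + iy : x ≥ −a² − C_V L, |y| ≤ 2|a|√(x + a² + C_V L)}`:
if `|a| ≤ min{1, |Im z|/(4√(Re z + 2 + C_V L))}` and `Re z + 2 + C_V L > 0`, then
`dist(z, Q) ≥ min{1, |Im z|/2}`. -/
theorem stmt_12 (a : ℝ) (CV L : ℝ) (z : ℂ) (hCV : 1 ≤ CV) (hL : 1 ≤ L)
    (hz : z.im ≠ 0) (hpos : 0 < z.re + 2 + CV * L)
    (ha : |a| ≤ min 1 (|z.im| / (4 * Real.sqrt (z.re + 2 + CV * L)))) :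
    ∀ w ∈ {w : ℂ | -a ^ 2 - CV * L ≤ w.re ∧
        |w.im| ≤ 2 * |a| * Real.sqrt (w.re + a ^ 2 + CV * L)},
      min 1 (|z.im| / 2) ≤ ‖z - w‖ :=
  stmt_12_general a CV L z ha
end

section
/- Let μ_ω = Σ_γ v_γ δ_{y_γ} be a Poisson point process on ℝ^d with unit intensity and i.i.d. weights v_γ (independent of the points) satisfying E|v₁|^{d+1} < ∞. For Z > 0 define the event Ω_Z = {ω : ∫_{Q_k} d|μ_ω| ≤ Z⟨k⟩ for all k ∈ ℤ^d}, where Q_k = {y : |y − k|_∞ ≤ 1} and ⟨k⟩ = sqrt(1 + |k|²). Then P(Ω_Z^c) = O(Z^{−d−1}); in particular P(Ω_Z) → 1 as Z → ∞. -/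
open MeasureTheory ProbabilityTheory Filter
open scoped ENNReal NNReal Nat Topology

/-!
Write `X_k = ∑_γ |v_γ| 1_{Q_k}(y_γ)` and `N_k` for the number of points in `Q_k`. The power-mean
inequality gives `X_k^{d+1} ≤ N_k^d ∑_γ |v_γ|^{d+1} 1_{Q_k}(y_γ)`; since the weights are i.i.d. and
independent of the points, `E X_k^{d+1} ≤ E|v_0|^{d+1} · E N_k^{d+1}`, and `N_k` is Poisson with
mean `vol Q_k = 2^d`, so this bound is finite and uniform in `k`. Markov's inequality then gives
`P(X_k > Z⟨k⟩) ≲ Z^{-d-1} ⟨k⟩^{-d-1}`, and a union bound over `k ∈ ℤ^d` concludes, because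
`⟨k⟩^{d+1} ≥ ∏_i (1 + k_i²)^q` with `q = (d+2)/(2(d+1)) > 1/2` makes `∑_k ⟨k⟩^{-d-1}` finite.
-/

lemma ENNReal.tsum_subtype_pow_le {ι : Type*} (s : Set ι) (w : ι → ℝ≥0∞) (m : ℕ) :
    (∑' i : s, w i) ^ (m + 1) ≤ (s.encard : ℝ≥0∞) ^ m * ∑' i : s, w i ^ (m + 1) := by
  rcases s.finite_or_infinite with hs | hs
  · obtain ⟨t, rfl⟩ := hs.exists_finset_coe
    have := ENNReal.rpow_sum_le_const_mul_sum_rpow t w (p := ((m + 1 : ℕ) : ℝ)) (by simp)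
    simp only [ENNReal.rpow_natCast, Nat.cast_add, Nat.cast_one, add_sub_cancel_right] at this
    rw [Finset.tsum_subtype' t w, Finset.tsum_subtype' t (w · ^ (m + 1)),
      Set.encard_coe_eq_coe_finsetCard]
    exact_mod_cast this
  · rcases m.eq_zero_or_pos with rfl | hm
    · simp
    by_cases hw : ∑' i : s, w i ^ (m + 1) = 0
    · have : ∀ i : s, w i = 0 := fun i => by simpa using ENNReal.tsum_eq_zero.1 hw i
      simp [this]
    · rw [hs.encard_eq, ENat.toENNReal_top, ENNReal.top_pow hm.ne', ENNReal.top_mul hw]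
      exact le_top

lemma ENNReal.tsum_pi_prod {α : Type*} (g : α → ℝ≥0∞) (m : ℕ) :
    ∑' k : Fin m → α, ∏ i, g (k i) = (∑' a, g a) ^ m := by
  induction m with
  | zero => simp
  | succ m ih =>
    rw [← (Fin.consEquiv fun _ => α).tsum_eq]
    simp only [Fin.consEquiv, Equiv.coe_fn_mk, Fin.prod_univ_succ, Fin.cons_zero, Fin.cons_succ]
    rw [ENNReal.tsum_prod', pow_succ', ← ih, ← ENNReal.tsum_mul_right]
    simp [ENNReal.tsum_mul_left]

lemma lintegral_natCast_pow_poissonMeasure_lt_top (r : ℝ≥0) (m : ℕ) :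
    ∫⁻ n, (n : ℝ≥0∞) ^ m ∂poissonMeasure r < ⊤ := by
  have hsum : Summable fun n : ℕ => Real.exp (-r) * r ^ n / n ! * ‖(n : ℝ) ^ m‖ := by
    refine .of_nonneg_of_le (fun n => by positivity) (fun n => ?_)
      ((Real.summable_pow_div_factorial (Real.exp 1 * r)).mul_left (Real.exp (-r) * m !))
    have hpow : (n : ℝ) ^ m ≤ m ! * Real.exp 1 ^ n := by
      have := Real.pow_div_factorial_le_exp (n : ℝ) n.cast_nonneg m
      rw [div_le_iff₀ (by positivity), ← Real.exp_one_pow] at this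
      linarith
    rw [Real.norm_of_nonneg (by positivity), mul_pow]
    calc Real.exp (-r) * r ^ n / n ! * (n : ℝ) ^ m
        ≤ Real.exp (-r) * r ^ n / n ! * (m ! * Real.exp 1 ^ n) := by gcongr
      _ = Real.exp (-r) * m ! * (Real.exp 1 ^ n * r ^ n / n !) := by ring
  have := (integrable_poissonMeasure_iff.2 hsum).hasFiniteIntegral
  simpa [HasFiniteIntegral, ← ofReal_norm] using this

lemma lintegral_comp_eq_lintegral_poissonMeasure {Ω : Type*} [MeasurableSpace Ω]
    (P : Measure Ω) [IsProbabilityMeasure P]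
    {N : Ω → ℝ≥0∞} (hN : Measurable N) {r : ℝ≥0}
    (hPo : ∀ n : ℕ, P (N ⁻¹' {(n : ℝ≥0∞)}) = poissonMeasure r {n}) (f : ℝ≥0∞ → ℝ≥0∞) :
    ∫⁻ ω, f (N ω) ∂P = ∫⁻ n, f n ∂poissonMeasure r := by
  set E : ℕ → Set Ω := fun n => N ⁻¹' {(n : ℝ≥0∞)}
  have hE : ∀ n, MeasurableSet (E n) := fun n => hN (measurableSet_singleton _)
  have hdisj : Pairwise (Function.onFun Disjoint E) := fun m n hmn =>
    (Set.disjoint_singleton.2 (by exact_mod_cast hmn)).preimage N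
  have hfull : ∀ᵐ ω ∂P, ω ∈ ⋃ n, E n := by
    rw [ae_iff, ← Set.compl_def, prob_compl_eq_zero_iff (.iUnion hE), measure_iUnion hdisj hE]
    simp only [E, hPo]
    simpa using (lintegral_countable' (μ := poissonMeasure r) 1).symm
  calc ∫⁻ ω, f (N ω) ∂P = ∫⁻ ω in ⋃ n, E n, f (N ω) ∂P := by
        rw [Measure.restrict_eq_self_of_ae_mem hfull]
    _ = ∑' n, ∫⁻ ω in E n, f (N ω) ∂P := lintegral_iUnion hE hdisj _
    _ = ∑' n : ℕ, f n * poissonMeasure r {n} := by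
        refine tsum_congr fun n => ?_
        rw [setLIntegral_congr_fun (hE n) (fun ω hω => by rw [show N ω = n from hω]),
          setLIntegral_const, hPo]
    _ = ∫⁻ n, f n ∂poissonMeasure r := (lintegral_countable' _).symm

section PointProcess

variable {Ω E : Type*}

/-- With `w = |v|` this is `|μ_ω|(A)` for the random measure `μ_ω = ∑_γ v_γ δ_{y_γ}`. -/
noncomputable def markedCount (y : ℕ → Ω → E) (w : ℕ → Ω → ℝ≥0∞) (A : Set E) (ω : Ω) : ℝ≥0∞ :=
  ∑' γ, A.indicator (fun _ => w γ ω) (y γ ω)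

noncomputable def pointCount (y : ℕ → Ω → E) (A : Set E) (ω : Ω) : ℝ≥0∞ :=
  ∑' γ, A.indicator 1 (y γ ω)

variable {y : ℕ → Ω → E} {w : ℕ → Ω → ℝ≥0∞} {A : Set E}

lemma markedCount_eq_tsum_subtype (y : ℕ → Ω → E) (w : ℕ → Ω → ℝ≥0∞) (A : Set E) (ω : Ω) :
    markedCount y w A ω = ∑' γ : {γ | y γ ω ∈ A}, w γ ω := by
  rw [tsum_subtype {γ | y γ ω ∈ A} (w · ω)]; rfl

lemma pointCount_eq_encard (y : ℕ → Ω → E) (A : Set E) (ω : Ω) :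
    pointCount y A ω = {γ | y γ ω ∈ A}.encard := by
  rw [← ENNReal.tsum_set_one, tsum_subtype {γ | y γ ω ∈ A} fun _ => 1]; rfl

lemma pointCount_eq_natCast_iff {ω : Ω} {n : ℕ} :
    pointCount y A ω = n ↔ {γ | y γ ω ∈ A}.Finite ∧ {γ | y γ ω ∈ A}.ncard = n := by
  rw [pointCount_eq_encard]
  constructor
  · intro h
    have hfin := Set.finite_of_encard_eq_coe (k := n) (by exact_mod_cast h)
    refine ⟨hfin, ?_⟩
    rw [← hfin.cast_ncard_eq] at h
    exact_mod_cast h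
  · rintro ⟨hfin, rfl⟩
    rw [← hfin.cast_ncard_eq]
    rfl

lemma markedCount_pow_le (y : ℕ → Ω → E) (w : ℕ → Ω → ℝ≥0∞) (A : Set E) (ω : Ω) (m : ℕ) :
    markedCount y w A ω ^ (m + 1) ≤
      pointCount y A ω ^ m * markedCount y (fun γ ω => w γ ω ^ (m + 1)) A ω := by
  simpa only [markedCount_eq_tsum_subtype, pointCount_eq_encard]
    using ENNReal.tsum_subtype_pow_le {γ | y γ ω ∈ A} (w · ω) m

variable [MeasurableSpace Ω] [MeasurableSpace E]

lemma measurable_markedCount (hy : ∀ γ, Measurable (y γ)) (hw : ∀ γ, Measurable (w γ))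
    (hA : MeasurableSet A) : Measurable (markedCount y w A) :=
  .tsum fun γ => (hw γ).indicator (hy γ hA)

lemma measurable_pointCount (hy : ∀ γ, Measurable (y γ)) (hA : MeasurableSet A) :
    Measurable (pointCount y A) :=
  .tsum fun γ => (measurable_const.indicator hA).comp (hy γ)

lemma lintegral_markedCount_pow_le (P : Measure Ω) (hy : ∀ γ, Measurable (y γ))
    (hw : ∀ γ, Measurable (w γ)) (hA : MeasurableSet A)
    (hiid : ∀ γ, IdentDistrib (w γ) (w 0) P P)
    (hindep : IndepFun (fun ω γ => w γ ω) (fun ω γ => y γ ω) P) (m : ℕ) :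
    ∫⁻ ω, markedCount y w A ω ^ (m + 1) ∂P ≤
      (∫⁻ ω, w 0 ω ^ (m + 1) ∂P) * ∫⁻ ω, pointCount y A ω ^ (m + 1) ∂P := by
  set M := ∫⁻ ω, w 0 ω ^ (m + 1) ∂P
  set g : ℕ → Ω → ℝ≥0∞ := fun γ ω => pointCount y A ω ^ m * A.indicator 1 (y γ ω)
  have hg : ∀ γ, Measurable (g γ) := fun γ =>
    ((measurable_pointCount hy hA).pow_const m).mul ((measurable_const.indicator hA).comp (hy γ))
  -- `g γ` depends on the points only
  have hindep_g : ∀ γ, IndepFun (fun ω => w γ ω ^ (m + 1)) (g γ) P := fun γ =>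
    hindep.comp ((measurable_pi_apply γ).pow_const (m + 1))
      (((measurable_pointCount (fun γ => measurable_pi_apply γ) hA).pow_const m).mul
        ((measurable_const.indicator hA).comp (measurable_pi_apply γ)))
  calc ∫⁻ ω, markedCount y w A ω ^ (m + 1) ∂P
      ≤ ∫⁻ ω, ∑' γ, w γ ω ^ (m + 1) * g γ ω ∂P := by
        refine lintegral_mono fun ω => (markedCount_pow_le y w A ω m).trans_eq ?_
        rw [markedCount, ← ENNReal.tsum_mul_left]
        refine tsum_congr fun γ => ?_
        by_cases h : y γ ω ∈ A <;> simp [g, h, mul_comm]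
    _ = ∑' γ, ∫⁻ ω, w γ ω ^ (m + 1) * g γ ω ∂P :=
        lintegral_tsum fun γ => (((hw γ).pow_const _).mul (hg γ)).aemeasurable
    _ = ∑' γ, M * ∫⁻ ω, g γ ω ∂P := tsum_congr fun γ => by
        rw [lintegral_mul_eq_lintegral_mul_lintegral_of_indepFun''
          ((hw γ).pow_const _).aemeasurable (hg γ).aemeasurable (hindep_g γ)]
        congr 1
        exact ((hiid γ).comp (measurable_id.pow_const (m + 1))).lintegral_eq
    _ = M * ∫⁻ ω, pointCount y A ω ^ (m + 1) ∂P := by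
        rw [ENNReal.tsum_mul_left, ← lintegral_tsum fun γ => (hg γ).aemeasurable]
        simp only [g, ENNReal.tsum_mul_left, pow_succ]
        rfl

lemma lintegral_pointCount_pow_eq (P : Measure Ω) [IsProbabilityMeasure P]
    (hy : ∀ γ, Measurable (y γ)) (hA : MeasurableSet A) {r : ℝ≥0}
    (hPo : ∀ n : ℕ, P {ω | {γ | y γ ω ∈ A}.Finite ∧ {γ | y γ ω ∈ A}.ncard = n} =
      poissonMeasure r {n}) (m : ℕ) :
    ∫⁻ ω, pointCount y A ω ^ m ∂P = ∫⁻ n, (n : ℝ≥0∞) ^ m ∂poissonMeasure r :=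
  lintegral_comp_eq_lintegral_poissonMeasure P (measurable_pointCount hy hA)
    (fun n => by rw [← hPo n]; congr 1; ext ω; exact pointCount_eq_natCast_iff) (· ^ m)

end PointProcess

def closedCube {d : ℕ} (c : Fin d → ℝ) (r : ℝ) : Set (EuclideanSpace ℝ (Fin d)) :=
  {x | ∀ i, |x i - c i| ≤ r}

lemma closedCube_eq_preimage_pi {d : ℕ} (c : Fin d → ℝ) (r : ℝ) :
    closedCube c r = (MeasurableEquiv.toLp 2 (Fin d → ℝ)).symm ⁻¹'
      Set.univ.pi fun i => Set.Icc (c i - r) (c i + r) := by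
  ext x
  simp only [closedCube, Set.mem_ofPred_eq, Set.mem_preimage, Set.mem_pi, Set.mem_univ,
    true_implies, Set.mem_Icc, MeasurableEquiv.toLp_symm_apply, abs_sub_le_iff]
  refine forall_congr' fun i => ?_
  constructor <;> rintro ⟨h₁, h₂⟩ <;> constructor <;> linarith

lemma measurableSet_closedCube {d : ℕ} (c : Fin d → ℝ) (r : ℝ) :
    MeasurableSet (closedCube c r) := by
  rw [closedCube_eq_preimage_pi]
  exact (MeasurableEquiv.toLp 2 _).symm.measurable (.univ_pi fun _ => measurableSet_Icc)

lemma volume_closedCube {d : ℕ} (c : Fin d → ℝ) (r : ℝ) :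
    volume (closedCube c r) = ENNReal.ofReal (2 * r) ^ d := by
  rw [closedCube_eq_preimage_pi,
    (EuclideanSpace.volume_preserving_symm_measurableEquiv_toLp (Fin d)).measure_preimage
      (MeasurableSet.univ_pi fun _ => measurableSet_Icc).nullMeasurableSet,
    volume_pi_pi]
  simp [Real.volume_Icc, two_mul, add_sub_sub_cancel]

lemma summable_one_add_int_sq_rpow_neg {q : ℝ} (hq : 1 < 2 * q) :
    Summable fun n : ℤ => (1 + (n : ℝ) ^ 2) ^ (-q) := by
  refine .of_norm_bounded_eventually (Real.summable_abs_int_rpow hq) ?_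
  filter_upwards [Set.Finite.compl_mem_cofinite (Set.finite_singleton (0 : ℤ))] with n hn
  have hn : (n : ℝ) ≠ 0 := by exact_mod_cast hn
  calc ‖(1 + (n : ℝ) ^ 2) ^ (-q)‖ = (1 + (n : ℝ) ^ 2) ^ (-q) :=
        Real.norm_of_nonneg (by positivity)
    _ ≤ ((n : ℝ) ^ 2) ^ (-q) :=
        Real.rpow_le_rpow_of_nonpos (by positivity) (by linarith) (by linarith)
    _ = |(n : ℝ)| ^ (-(2 * q)) := by
        rw [← sq_abs, ← Real.rpow_natCast, ← Real.rpow_mul (abs_nonneg _)]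
        push_cast
        ring_nf

lemma prod_one_add_sq_rpow_le (d : ℕ) (k : Fin d → ℝ) :
    ∏ i, (1 + k i ^ 2) ^ (((d : ℝ) + 2) / (2 * (d + 1))) ≤ √(1 + ∑ i, k i ^ 2) ^ (d + 1) := by
  set S := ∑ i, k i ^ 2
  have hS : 1 ≤ 1 + S := le_add_of_nonneg_right (by positivity)
  calc ∏ i, (1 + k i ^ 2) ^ (((d : ℝ) + 2) / (2 * (d + 1)))
      ≤ ∏ _i : Fin d, (1 + S) ^ (((d : ℝ) + 2) / (2 * (d + 1))) := by
        gcongr with i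
        exact Finset.single_le_sum (fun j _ => sq_nonneg (k j)) (Finset.mem_univ i)
    _ = (1 + S) ^ (((d : ℝ) + 2) / (2 * (d + 1)) * d) := by
        rw [Finset.prod_const, Finset.card_univ, Fintype.card_fin,
          ← Real.rpow_mul_natCast (by positivity)]
    _ ≤ (1 + S) ^ (((d : ℝ) + 1) / 2) := by
        refine Real.rpow_le_rpow_of_exponent_le hS ?_
        rw [div_mul_eq_mul_div, div_le_div_iff₀ (by positivity) (by positivity)]
        nlinarith
    _ = √(1 + S) ^ (d + 1) := by
        rw [Real.sqrt_eq_rpow, ← Real.rpow_natCast, ← Real.rpow_mul (by positivity)]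
        push_cast
        ring_nf

lemma tsum_inv_sqrt_one_add_sum_sq_pow_lt_top (d : ℕ) :
    ∑' k : Fin d → ℤ, (ENNReal.ofReal √(1 + ∑ i, (k i : ℝ) ^ 2) ^ (d + 1))⁻¹ < ⊤ := by
  set q : ℝ := ((d : ℝ) + 2) / (2 * (d + 1))
  have hq : 1 < 2 * q := by
    rw [mul_div_assoc', lt_div_iff₀ (by positivity)]
    linarith
  set g : ℤ → ℝ≥0∞ := fun n => ENNReal.ofReal ((1 + (n : ℝ) ^ 2) ^ (-q))
  have hg : ∑' n, g n < ⊤ := by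
    rw [← ENNReal.ofReal_tsum_of_nonneg (fun n => by positivity)
      (summable_one_add_int_sq_rpow_neg hq)]
    exact ENNReal.ofReal_lt_top
  have hle : ∀ k : Fin d → ℤ,
      (ENNReal.ofReal √(1 + ∑ i, (k i : ℝ) ^ 2) ^ (d + 1))⁻¹ ≤ ∏ i, g (k i) := fun k => by
    have hprod := prod_one_add_sq_rpow_le d (fun i => k i)
    have hpos : 0 < ∏ i, (1 + (k i : ℝ) ^ 2) ^ q := by positivity
    rw [← ENNReal.ofReal_pow (Real.sqrt_nonneg _),
      ← ENNReal.ofReal_inv_of_pos (hpos.trans_le hprod)]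
    have hinv : ∏ i, (1 + (k i : ℝ) ^ 2) ^ (-q) = (∏ i, (1 + (k i : ℝ) ^ 2) ^ q)⁻¹ := by
      rw [← Finset.prod_inv_distrib]
      exact Finset.prod_congr rfl fun i _ => Real.rpow_neg (by positivity) q
    rw [← ENNReal.ofReal_prod_of_nonneg (fun i _ => by positivity), hinv]
    exact ENNReal.ofReal_le_ofReal (inv_anti₀ hpos hprod)
  calc _ ≤ ∑' k : Fin d → ℤ, ∏ i, g (k i) := ENNReal.tsum_le_tsum hle
    _ = (∑' n, g n) ^ d := ENNReal.tsum_pi_prod g d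
    _ < ⊤ := ENNReal.pow_lt_top hg

section Tail

variable {Ω : Type*} [MeasurableSpace Ω]

lemma measure_not_forall_le_le_tsum {ι : Type*} [Countable ι] (P : Measure Ω)
    {X : ι → Ω → ℝ≥0∞} (hX : ∀ k, AEMeasurable (X k) P) {s : ι → ℝ≥0∞} (hs₀ : ∀ k, s k ≠ 0)
    (hs : ∀ k, s k ≠ ⊤) (p : ℕ) :
    P {ω | ¬ ∀ k, X k ω ≤ s k} ≤ ∑' k, (∫⁻ ω, X k ω ^ p ∂P) / s k ^ p := by
  calc P {ω | ¬ ∀ k, X k ω ≤ s k} ≤ P (⋃ k, {ω | s k ^ p ≤ X k ω ^ p}) := by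
        refine measure_mono fun ω hω => ?_
        obtain ⟨k, hk⟩ := not_forall.1 hω
        exact Set.mem_iUnion.2 ⟨k, pow_le_pow_left₀ zero_le (not_le.1 hk).le p⟩
    _ ≤ ∑' k, P {ω | s k ^ p ≤ X k ω ^ p} := measure_iUnion_le _
    _ ≤ _ := ENNReal.tsum_le_tsum fun k => meas_ge_le_lintegral_div ((hX k).pow_const p)
        (pow_ne_zero _ (hs₀ k)) (ENNReal.pow_ne_top (hs k))

lemma exists_measure_not_forall_le_mul_sqrt_le (P : Measure Ω) {d : ℕ}
    {X : (Fin d → ℤ) → Ω → ℝ≥0∞} (hX : ∀ k, AEMeasurable (X k) P) {C : ℝ≥0∞} (hC : C ≠ ⊤)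
    (hmom : ∀ k, ∫⁻ ω, X k ω ^ (d + 1) ∂P ≤ C) :
    ∃ c : ℝ, 0 ≤ c ∧ ∀ Z : ℝ, 0 < Z →
      P {ω | ¬ ∀ k, X k ω ≤ ENNReal.ofReal (Z * √(1 + ∑ i, (k i : ℝ) ^ 2))} ≤
        ENNReal.ofReal (c / Z ^ (d + 1)) := by
  set L := ∑' k : Fin d → ℤ, (ENNReal.ofReal √(1 + ∑ i, (k i : ℝ) ^ 2) ^ (d + 1))⁻¹
  have hL : L ≠ ⊤ := (tsum_inv_sqrt_one_add_sum_sq_pow_lt_top d).ne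
  refine ⟨(C * L).toReal, ENNReal.toReal_nonneg, fun Z hZ => ?_⟩
  have hpos : ∀ k : Fin d → ℤ, 0 < Z * √(1 + ∑ i, (k i : ℝ) ^ 2) := fun k => by positivity
  calc _ ≤ ∑' k, (∫⁻ ω, X k ω ^ (d + 1) ∂P) /
          ENNReal.ofReal (Z * √(1 + ∑ i, (k i : ℝ) ^ 2)) ^ (d + 1) :=
        measure_not_forall_le_le_tsum P hX (fun k => ENNReal.ofReal_pos.2 (hpos k) |>.ne')
          (fun _ => ENNReal.ofReal_ne_top) _
    _ ≤ ∑' k : Fin d → ℤ, C * (ENNReal.ofReal Z ^ (d + 1))⁻¹ *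
          (ENNReal.ofReal √(1 + ∑ i, (k i : ℝ) ^ 2) ^ (d + 1))⁻¹ := by
        refine ENNReal.tsum_le_tsum fun k => ?_
        rw [ENNReal.ofReal_mul hZ.le, mul_pow, div_eq_mul_inv,
          ENNReal.mul_inv (.inr (ENNReal.pow_ne_top ENNReal.ofReal_ne_top))
            (.inl (ENNReal.pow_ne_top ENNReal.ofReal_ne_top)), ← mul_assoc]
        gcongr
        exact hmom k
    _ = ENNReal.ofReal ((C * L).toReal / Z ^ (d + 1)) := by
        rw [ENNReal.tsum_mul_left, div_eq_mul_inv, ENNReal.ofReal_mul ENNReal.toReal_nonneg,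
          ENNReal.ofReal_toReal (ENNReal.mul_ne_top hC hL),
          ENNReal.ofReal_inv_of_pos (by positivity), ENNReal.ofReal_pow hZ.le]
        ring

lemma tendsto_measure_of_measure_compl_le (P : Measure Ω) [IsProbabilityMeasure P]
    {S : ℝ → Set Ω} {c : ℝ} {p : ℕ} (hp : p ≠ 0)
    (h : ∀ Z : ℝ, 0 < Z → P (S Z)ᶜ ≤ ENNReal.ofReal (c / Z ^ p)) :
    Tendsto (fun Z => P (S Z)) atTop (𝓝 1) := by
  have hbound : Tendsto (fun Z : ℝ => ENNReal.ofReal (c / Z ^ p)) atTop (𝓝 0) := by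
    rw [← ENNReal.ofReal_zero]
    exact ENNReal.tendsto_ofReal (tendsto_const_nhds.div_atTop (tendsto_pow_atTop hp))
  have hcompl : Tendsto (fun Z => P (S Z)ᶜ) atTop (𝓝 0) :=
    tendsto_of_tendsto_of_tendsto_of_le_of_le' tendsto_const_nhds hbound
      (.of_forall fun _ => zero_le) ((eventually_gt_atTop 0).mono h)
  have hlower : Tendsto (fun Z => 1 - P (S Z)ᶜ) atTop (𝓝 1) := by
    simpa using ENNReal.Tendsto.sub tendsto_const_nhds hcompl (.inl ENNReal.one_ne_top)
  refine tendsto_of_tendsto_of_tendsto_of_le_of_le hlower tendsto_const_nhds (fun Z => ?_)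
    (fun _ => prob_le_one)
  exact tsub_le_iff_right.2 (by simpa using measure_univ_le_add_compl (S Z) (μ := P))

end Tail

theorem stmt_13_general {Ω : Type*} [MeasurableSpace Ω] (P : Measure Ω) [IsProbabilityMeasure P]
    (d : ℕ)
    (y : ℕ → Ω → EuclideanSpace ℝ (Fin d)) (hy : ∀ γ, Measurable (y γ))
    (v : ℕ → Ω → ℝ) (hv : ∀ γ, Measurable (v γ))
    -- the point process has Poisson distributed counts with intensity `volume`
    (hPoisson : ∀ A : Set (EuclideanSpace ℝ (Fin d)), MeasurableSet A → volume A < ⊤ →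
      ∀ n : ℕ, P {ω | {γ : ℕ | y γ ω ∈ A}.Finite ∧ {γ : ℕ | y γ ω ∈ A}.ncard = n} =
        ENNReal.ofReal
          (Real.exp (-(volume A).toReal) * (volume A).toReal ^ n / n.factorial))
    -- the weights are i.i.d. ...
    (hiid : ∀ γ, IdentDistrib (v γ) (v 0) P P)
    -- ... and independent of the points
    (hindepY : IndepFun (fun ω γ => v γ ω) (fun ω γ => y γ ω) P)
    -- finite (d+1)-st absolute moment of the weights
    (hmom : (∫⁻ ω, (‖v 0 ω‖₊ : ℝ≥0∞) ^ (d + 1) ∂P) < ⊤) :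
    (∃ c : ℝ, 0 ≤ c ∧ ∀ Z : ℝ, 0 < Z →
      P {ω | ¬ ∀ k : Fin d → ℤ,
          (∑' γ : ℕ, {x : EuclideanSpace ℝ (Fin d) | ∀ i, |x i - (k i : ℝ)| ≤ 1}.indicator
              (fun _ => (‖v γ ω‖₊ : ℝ≥0∞)) (y γ ω)) ≤
            ENNReal.ofReal (Z * Real.sqrt (1 + ∑ i, ((k i : ℝ)) ^ 2))} ≤
        ENNReal.ofReal (c / Z ^ (d + 1))) ∧
    Tendsto (fun Z : ℝ =>
      P {ω | ∀ k : Fin d → ℤ,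
          (∑' γ : ℕ, {x : EuclideanSpace ℝ (Fin d) | ∀ i, |x i - (k i : ℝ)| ≤ 1}.indicator
              (fun _ => (‖v γ ω‖₊ : ℝ≥0∞)) (y γ ω)) ≤
            ENNReal.ofReal (Z * Real.sqrt (1 + ∑ i, ((k i : ℝ)) ^ 2))})
      atTop (nhds 1) := by
  set w : ℕ → Ω → ℝ≥0∞ := fun γ ω => ‖v γ ω‖₊
  set Q : (Fin d → ℤ) → Set (EuclideanSpace ℝ (Fin d)) := fun k => closedCube (fun i => k i) 1
  have hw : ∀ γ, Measurable (w γ) := fun γ => (hv γ).nnnorm.coe_nnreal_ennreal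
  have hQ : ∀ k, MeasurableSet (Q k) := fun k => measurableSet_closedCube _ 1
  have hcount : ∀ k (n : ℕ), P {ω | {γ | y γ ω ∈ Q k}.Finite ∧ {γ | y γ ω ∈ Q k}.ncard = n} =
      poissonMeasure (2 ^ d) {n} := fun k n => by
    rw [hPoisson _ (hQ k) (by simp [Q, volume_closedCube]) n, volume_closedCube,
      poissonMeasure_singleton]
    norm_num
  have hindep : IndepFun (fun ω γ => w γ ω) (fun ω γ => y γ ω) P :=
    hindepY.comp (measurable_pi_lambda _ fun γ =>
      (measurable_pi_apply γ).nnnorm.coe_nnreal_ennreal) measurable_id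
  have hmoment : ∀ k, ∫⁻ ω, markedCount y w (Q k) ω ^ (d + 1) ∂P ≤
      (∫⁻ ω, w 0 ω ^ (d + 1) ∂P) * ∫⁻ n, (n : ℝ≥0∞) ^ (d + 1) ∂poissonMeasure (2 ^ d) := by
    intro k
    rw [← lintegral_pointCount_pow_eq P hy (hQ k) (hcount k)]
    exact lintegral_markedCount_pow_le P hy hw (hQ k)
      (fun γ => (hiid γ).comp measurable_nnnorm.coe_nnreal_ennreal) hindep d
  obtain ⟨c, hc₀, hc⟩ := exists_measure_not_forall_le_mul_sqrt_le P
    (fun k => (measurable_markedCount hy hw (hQ k)).aemeasurable)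
    (ENNReal.mul_ne_top hmom.ne (lintegral_natCast_pow_poissonMeasure_lt_top _ _).ne) hmoment
  exact ⟨⟨c, hc₀, hc⟩, tendsto_measure_of_measure_compl_le P d.succ_ne_zero hc⟩

/-- For a Poisson point process `{y_γ}` on `ℝ^d` with unit intensity (the number of points in
any finite-volume measurable set `A` is Poisson with mean `vol(A)`) and i.i.d. weights `{v_γ}`
independent of the points with `E|v₁|^{d+1} < ∞`, define
`X_k(ω) = ∫_{Q_k} d|μ_ω| = Σ_γ |v_γ(ω)| 1_{y_γ(ω) ∈ Q_k}` where
`Q_k = {y : |y − k|_∞ ≤ 1}` and `⟨k⟩ = √(1 + |k|²)`. Then the complement of the event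
`Ω_Z = {ω : X_k(ω) ≤ Z⟨k⟩ for all k ∈ ℤ^d}` has probability `O(Z^{−d−1})`; in particular
`P(Ω_Z) → 1` as `Z → ∞`. -/
theorem stmt_13 {Ω : Type*} [MeasurableSpace Ω] (P : Measure Ω) [IsProbabilityMeasure P]
    (d : ℕ) (hd : 1 ≤ d)
    (y : ℕ → Ω → EuclideanSpace ℝ (Fin d)) (hy : ∀ γ, Measurable (y γ))
    (v : ℕ → Ω → ℝ) (hv : ∀ γ, Measurable (v γ))
    -- the point process has Poisson distributed counts with intensity `volume`
    (hPoisson : ∀ A : Set (EuclideanSpace ℝ (Fin d)), MeasurableSet A → volume A < ⊤ →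
      ∀ n : ℕ, P {ω | {γ : ℕ | y γ ω ∈ A}.Finite ∧ {γ : ℕ | y γ ω ∈ A}.ncard = n} =
        ENNReal.ofReal
          (Real.exp (-(volume A).toReal) * (volume A).toReal ^ n / n.factorial))
    -- the weights are i.i.d. ...
    (hiid : ∀ γ, IdentDistrib (v γ) (v 0) P P)
    (hindep : iIndepFun v P)
    -- ... and independent of the points
    (hindepY : IndepFun (fun ω γ => v γ ω) (fun ω γ => y γ ω) P)
    -- finite (d+1)-st absolute moment of the weights
    (hmom : (∫⁻ ω, (‖v 0 ω‖₊ : ℝ≥0∞) ^ (d + 1) ∂P) < ⊤) :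
    (∃ c : ℝ, 0 ≤ c ∧ ∀ Z : ℝ, 0 < Z →
      P {ω | ¬ ∀ k : Fin d → ℤ,
          (∑' γ : ℕ, {x : EuclideanSpace ℝ (Fin d) | ∀ i, |x i - (k i : ℝ)| ≤ 1}.indicator
              (fun _ => (‖v γ ω‖₊ : ℝ≥0∞)) (y γ ω)) ≤
            ENNReal.ofReal (Z * Real.sqrt (1 + ∑ i, ((k i : ℝ)) ^ 2))} ≤
        ENNReal.ofReal (c / Z ^ (d + 1))) ∧
    Tendsto (fun Z : ℝ =>
      P {ω | ∀ k : Fin d → ℤ,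
          (∑' γ : ℕ, {x : EuclideanSpace ℝ (Fin d) | ∀ i, |x i - (k i : ℝ)| ≤ 1}.indicator
              (fun _ => (‖v γ ω‖₊ : ℝ≥0∞)) (y γ ω)) ≤
            ENNReal.ofReal (Z * Real.sqrt (1 + ∑ i, ((k i : ℝ)) ^ 2))})
      atTop (nhds 1) :=
  stmt_13_general P d y hy v hv hPoisson hiid hindepY hmom
end
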